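/- Let k, n, m, p be positive integers with m ≥ n. Let C ⊆ ℝ_{≥0}^k × ℝ^n be a cone containing the standard basis vectors e_1,…,e_k and with π_n(C) = ℝ^n (π_n being projection onto the ℝ^n factor). Let x_1,…,x_m ∈ C and let J_1,…,J_p ⊆ {1,…,m} be index sets each of cardinality n. For each i = 1,…,p set C_i = conic hull of {e_1,…,e_k} ∪ {x_j : j ∈ J_i} and D_i = conic hull of {π_n(x_j) : j ∈ J_i} ⊆ ℝ^n. Assume (a) C = C_1 ∪ ⋯ ∪ C_p, and (b) each D_i is a full sector in ℝ^n and {D_1,…,D_p} is a sector decomposition of ℝ^n. Then {C_1,…,C_p} is a sector decomposition of C (in particular each C_i is a full sector of dimension k+n); moreover π_n(C_i) = D_i for each i, and π_n(C_i ∩ C_ℓ) = D_i ∩ D_ℓ for all distinct i, ℓ. -/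

import Mathlib

noncomputable section

/-- The conic hull of a set `S`: all finite nonnegative real linear combinations
of elements of `S`. -/
def coneHull {V : Type*} [AddCommGroup V] [Module ℝ V] (S : Set V) : Set V :=
  { x | ∃ (n : ℕ) (c : Fin n → ℝ) (v : Fin n → V),
      (∀ i, 0 ≤ c i) ∧ (∀ i, v i ∈ S) ∧ x = ∑ i, c i • v i }

/-- A cone is the conic hull of a finite set. -/
def IsCone {V : Type*} [AddCommGroup V] [Module ℝ V] (C : Set V) : Prop :=
  ∃ S : Finset V, C = coneHull (S : Set V)

/-- The dimension of a cone: the dimension of its linear span. -/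
def coneDim {V : Type*} [AddCommGroup V] [Module ℝ V] (C : Set V) : ℕ :=
  Module.finrank ℝ (Submodule.span ℝ C)

/-- The rank of a cone: the minimum cardinality of a finite generating set. -/
def coneRank {V : Type*} [AddCommGroup V] [Module ℝ V] (C : Set V) : ℕ :=
  sInf { r : ℕ | ∃ S : Finset V, S.card = r ∧ C = coneHull (S : Set V) }

/-- A full cone: a cone whose dimension equals the ambient dimension. -/
def IsFullCone {V : Type*} [AddCommGroup V] [Module ℝ V] (C : Set V) : Prop :=
  IsCone C ∧ coneDim C = Module.finrank ℝ V

/-- A sector: a cone whose rank equals its dimension. -/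
def IsSector {V : Type*} [AddCommGroup V] [Module ℝ V] (C : Set V) : Prop :=
  IsCone C ∧ coneRank C = coneDim C

/-- A sector decomposition of a full cone `C`: a finite family of subcones, each a full
sector, whose union is `C`, with pairwise intersections of empty interior. -/
def IsSectorDecomposition {V : Type*} [AddCommGroup V] [Module ℝ V] [TopologicalSpace V]
    {p : ℕ} (C : Set V) (F : Fin p → Set V) : Prop :=
  (∀ i, F i ⊆ C) ∧ (∀ i, IsSector (F i) ∧ IsFullCone (F i)) ∧
  (C = ⋃ i, F i) ∧ ∀ i j, i ≠ j → interior (F i ∩ F j) = ∅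

/-- The intersection of two cones is a wall (of dimension `d`, one less than the ambient
dimension) if it is a cone of dimension `d`. -/
def IsWallDim {V : Type*} [AddCommGroup V] [Module ℝ V] (C C' : Set V) (d : ℕ) : Prop :=
  IsCone (C ∩ C') ∧ coneDim (C ∩ C') = d

/-!
Adding the rays through `e_1, …, e_k` to a cone does not change its projection, so
`π_n(C_i) = D_i`; and since `C_i` then contains `ker π_n = ℝ^k × 0` while `D_i` spans `ℝ^n`,
`C_i` spans `ℝ^k × ℝ^n`, so its `k + n` generators make it a full sector. The rays also make
each `C_i` stable under translation by `ℝ_{≥0}^k × 0`, and all first coordinates in `C` are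
nonnegative: points `(u, y) ∈ C_i` and `(u', y) ∈ C_ℓ` therefore both translate to
`(u + u', y) ∈ C_i ∩ C_ℓ`, giving `π_n(C_i ∩ C_ℓ) = D_i ∩ D_ℓ`. As `π_n` is an open map, an
interior point of `C_i ∩ C_ℓ` would project to one of `D_i ∩ D_ℓ`.
-/

open Set

section ConeHull

variable {V W : Type*} [AddCommGroup V] [Module ℝ V] [AddCommGroup W] [Module ℝ W]

theorem coneHull_eq_hull (S : Set V) : coneHull S = PointedCone.hull ℝ S := by
  ext x
  constructor
  · rintro ⟨n, c, v, hc, hv, rfl⟩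
    exact Submodule.sum_mem _ fun i _ =>
      (PointedCone.hull ℝ S).smul_mem (hc i) (PointedCone.subset_hull (hv i))
  · intro hx
    obtain ⟨n, c, v, rfl⟩ := Submodule.mem_span_set'.1 hx
    exact ⟨n, fun i => c i, fun i => v i, fun i => (c i).2, fun i => (v i).2, rfl⟩

theorem IsCone.coneHull_subset {C S : Set V} (hC : IsCone C) (hS : S ⊆ C) : coneHull S ⊆ C := by
  obtain ⟨T, rfl⟩ := hC
  simp only [coneHull_eq_hull] at hS ⊢
  exact SetLike.coe_subset_coe.2 (Submodule.span_le.2 hS)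

theorem add_mem_coneHull {S : Set V} {a b : V} (ha : a ∈ coneHull S) (hb : b ∈ coneHull S) :
    a + b ∈ coneHull S := by
  rw [coneHull_eq_hull] at *
  exact add_mem ha hb

theorem span_coneHull (S : Set V) : Submodule.span ℝ (coneHull S) = Submodule.span ℝ S := by
  rw [coneHull_eq_hull, Submodule.span_span_of_tower]

theorem image_coneHull (f : V →ₗ[ℝ] W) (S : Set V) : f '' coneHull S = coneHull (f '' S) := by
  rw [coneHull_eq_hull, coneHull_eq_hull, ← PointedCone.coe_map, PointedCone.map,
    Submodule.map_span]
  rfl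

theorem image_coneHull_union_of_map_eq_zero (f : V →ₗ[ℝ] W) {A B : Set V}
    (hA : ∀ a ∈ A, f a = 0) : f '' coneHull (A ∪ B) = coneHull (f '' B) := by
  have hfA : Submodule.span {c : ℝ // 0 ≤ c} (f '' A) = ⊥ :=
    Submodule.span_eq_bot.2 (by rintro _ ⟨a, ha, rfl⟩; exact hA a ha)
  rw [image_coneHull, image_union, coneHull_eq_hull, coneHull_eq_hull, PointedCone.hull,
    Submodule.span_union, hfA, bot_sup_eq]

theorem coneDim_le_coneRank {C : Set V} (hC : IsCone C) : coneDim C ≤ coneRank C := by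
  obtain ⟨S, hS⟩ := hC
  obtain ⟨T, hT, hTC⟩ := Nat.sInf_mem (⟨S.card, S, rfl, hS⟩ :
    { r : ℕ | ∃ T : Finset V, T.card = r ∧ C = coneHull (T : Set V) }.Nonempty)
  rw [coneRank, ← hT, coneDim, hTC, span_coneHull]
  exact finrank_span_finset_le_card T

theorem coneRank_le_card {C : Set V} (T : Finset V) (hTC : C = coneHull T) :
    coneRank C ≤ T.card :=
  Nat.sInf_le ⟨T, rfl, hTC⟩

theorem isSector_of_card_le {C : Set V} (T : Finset V) (hTC : C = coneHull T)
    (hT : T.card ≤ coneDim C) : IsSector C :=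
  ⟨⟨T, hTC⟩, le_antisymm ((coneRank_le_card T hTC).trans hT) (coneDim_le_coneRank ⟨T, hTC⟩)⟩

end ConeHull

theorem Submodule.eq_top_of_ker_le_of_map_eq_top {R M N : Type*} [Ring R] [AddCommGroup M]
    [Module R M] [AddCommGroup N] [Module R N] {f : M →ₗ[R] N} {P : Submodule R M}
    (hker : LinearMap.ker f ≤ P) (hmap : P.map f = ⊤) : P = ⊤ := by
  rw [← sup_eq_left.2 hker, ← Submodule.comap_map_eq, hmap, Submodule.comap_top]

theorem interior_eq_empty_of_isOpenMap {X Y : Type*} [TopologicalSpace X] [TopologicalSpace Y]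
    {f : X → Y} (hf : IsOpenMap f) {s : Set X} {t : Set Y} (hst : f '' s ⊆ t)
    (ht : interior t = ∅) : interior s = ∅ := by
  rw [← image_eq_empty (f := f), ← subset_empty_iff, ← ht]
  exact (hf.image_interior_subset s).trans (interior_mono hst)

theorem image_snd_inter_of_add_mem {V W : Type*} [AddCommMonoid V] [AddCommMonoid W]
    {P Q : Set (V × W)} (K : Set V) (hPK : ∀ z ∈ P, z.1 ∈ K) (hQK : ∀ z ∈ Q, z.1 ∈ K)
    (hP : ∀ z ∈ P, ∀ v ∈ K, z + (v, 0) ∈ P) (hQ : ∀ z ∈ Q, ∀ v ∈ K, z + (v, 0) ∈ Q) :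
    Prod.snd '' (P ∩ Q) = Prod.snd '' P ∩ Prod.snd '' Q := by
  refine (image_inter_subset _ _ _).antisymm ?_
  rintro y ⟨⟨z, hz, rfl⟩, ⟨w, hw, hwz⟩⟩
  refine ⟨(z.1 + w.1, z.2), ⟨?_, ?_⟩, rfl⟩
  · rw [show (z.1 + w.1, z.2) = z + (w.1, 0) from Prod.ext rfl (add_zero _).symm]
    exact hP z hz w.1 (hQK w hw)
  · rw [show (z.1 + w.1, z.2) = w + (z.1, 0) from Prod.ext (add_comm _ _) (by simp [hwz])]
    exact hQ w hw z.1 (hPK z hz)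

section StdBasisFst

variable (ι W : Type*) [DecidableEq ι] [AddCommGroup W] [Module ℝ W]

def stdBasisFst : ι → (ι → ℝ) × W := fun a => (Pi.single a 1, 0)

variable {ι W} {κ : Type*} (x : κ → (ι → ℝ) × W) (J : Set κ)

theorem image_snd_coneHull_stdBasisFst_union :
    Prod.snd '' coneHull (range (stdBasisFst ι W) ∪ x '' J) =
      coneHull ((fun j => (x j).2) '' J) := by
  calc Prod.snd '' coneHull (range (stdBasisFst ι W) ∪ x '' J)
      _ = coneHull (Prod.snd '' (x '' J)) :=
        image_coneHull_union_of_map_eq_zero (LinearMap.snd ℝ (ι → ℝ) W) (by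
          rintro _ ⟨a, rfl⟩; rfl)
      _ = coneHull ((fun j => (x j).2) '' J) := by rw [image_image]

variable [Fintype ι]

theorem sum_smul_stdBasisFst (v : ι → ℝ) : ∑ a, v a • stdBasisFst ι W a = (v, 0) := by
  ext a <;> simp [stdBasisFst, Prod.fst_sum, Prod.snd_sum, Pi.single_apply]

theorem mk_zero_mem_coneHull_stdBasisFst_union {v : ι → ℝ} (hv : ∀ a, 0 ≤ v a) :
    (v, 0) ∈ coneHull (range (stdBasisFst ι W) ∪ x '' J) := by
  rw [← sum_smul_stdBasisFst, coneHull_eq_hull]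
  exact Submodule.sum_mem _ fun a _ =>
    PointedCone.smul_mem _ (hv a) (PointedCone.subset_hull (Or.inl (mem_range_self a)))

theorem span_coneHull_stdBasisFst_union_eq_top
    (h : Submodule.span ℝ (coneHull ((fun j => (x j).2) '' J)) = ⊤) :
    Submodule.span ℝ (coneHull (range (stdBasisFst ι W) ∪ x '' J)) = ⊤ := by
  refine Submodule.eq_top_of_ker_le_of_map_eq_top (f := LinearMap.snd ℝ (ι → ℝ) W) ?_ ?_
  · rw [LinearMap.ker_snd]
    rintro _ ⟨v, rfl⟩
    rw [LinearMap.inl_apply, ← sum_smul_stdBasisFst, span_coneHull]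
    exact Submodule.sum_mem _ fun a _ =>
      Submodule.smul_mem _ _ (Submodule.subset_span (Or.inl (mem_range_self a)))
  · rw [Submodule.map_span, LinearMap.coe_snd, image_snd_coneHull_stdBasisFst_union, h]

theorem add_mk_zero_mem_coneHull_stdBasisFst_union {z : (ι → ℝ) × W}
    (hz : z ∈ coneHull (range (stdBasisFst ι W) ∪ x '' J)) {v : ι → ℝ} (hv : ∀ a, 0 ≤ v a) :
    z + (v, 0) ∈ coneHull (range (stdBasisFst ι W) ∪ x '' J) :=
  add_mem_coneHull hz (mk_zero_mem_coneHull_stdBasisFst_union x J hv)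

variable [FiniteDimensional ℝ W]

theorem coneDim_coneHull_stdBasisFst_union
    (h : Submodule.span ℝ (coneHull ((fun j => (x j).2) '' J)) = ⊤) :
    coneDim (coneHull (range (stdBasisFst ι W) ∪ x '' J)) =
      Fintype.card ι + Module.finrank ℝ W := by
  rw [coneDim, span_coneHull_stdBasisFst_union_eq_top x J h, finrank_top, Module.finrank_prod,
    Module.finrank_fintype_fun_eq_card]

theorem isSector_coneHull_stdBasisFst_union {J : Finset κ}
    (h : Submodule.span ℝ (coneHull ((fun j => (x j).2) '' J)) = ⊤)
    (hJ : J.card ≤ Module.finrank ℝ W) :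
    IsSector (coneHull (range (stdBasisFst ι W) ∪ x '' J)) := by
  classical
  refine isSector_of_card_le (Finset.univ.image (stdBasisFst ι W) ∪ J.image x) (by simp) ?_
  rw [coneDim_coneHull_stdBasisFst_union x _ h]
  exact (Finset.card_union_le _ _).trans
    (add_le_add (Finset.card_image_le.trans_eq (Finset.card_univ)) (Finset.card_image_le.trans hJ))

end StdBasisFst

theorem IsFullCone.span_eq_top {V : Type*} [AddCommGroup V] [Module ℝ V] [FiniteDimensional ℝ V]
    {C : Set V} (hC : IsFullCone C) : Submodule.span ℝ C = ⊤ :=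
  Submodule.eq_top_of_finrank_eq hC.2

theorem stmt_3_general (k n m p : ℕ)
    (C : Set ((Fin k → ℝ) × (Fin n → ℝ)))
    (hcone : IsCone C)
    (hsub : C ⊆ {q : (Fin k → ℝ) × (Fin n → ℝ) | ∀ i, 0 ≤ q.1 i})
    (he : ∀ i : Fin k, ((Pi.single i 1 : Fin k → ℝ), (0 : Fin n → ℝ)) ∈ C)
    (x : Fin m → (Fin k → ℝ) × (Fin n → ℝ)) (hx : ∀ j, x j ∈ C)
    (J : Fin p → Finset (Fin m)) (hJ : ∀ i, (J i).card = n)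
    (Cfam : Fin p → Set ((Fin k → ℝ) × (Fin n → ℝ)))
    (hCfam : ∀ i, Cfam i = coneHull
      ((Set.range fun a : Fin k => ((Pi.single a 1 : Fin k → ℝ), (0 : Fin n → ℝ)))
        ∪ (x '' ↑(J i))))
    (Dfam : Fin p → Set (Fin n → ℝ))
    (hDfam : ∀ i, Dfam i = coneHull ((fun j => (x j).2) '' ↑(J i)))
    (hCunion : C = ⋃ i, Cfam i)
    (hDdecomp : IsSectorDecomposition Set.univ Dfam) :
    IsSectorDecomposition C Cfam ∧
    (∀ i, coneDim (Cfam i) = k + n) ∧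
    (∀ i, Prod.snd '' Cfam i = Dfam i) ∧
    (∀ i l, i ≠ l → Prod.snd '' (Cfam i ∩ Cfam l) = Dfam i ∩ Dfam l) := by
  have hC : ∀ i, Cfam i = coneHull (range (stdBasisFst (Fin k) (Fin n → ℝ)) ∪ x '' J i) := hCfam
  obtain ⟨-, hDsector, -, hDinter⟩ := hDdecomp
  have hDspan : ∀ i, Submodule.span ℝ (coneHull ((fun j => (x j).2) '' J i)) = ⊤ := fun i =>
    hDfam i ▸ (hDsector i).2.span_eq_top
  have hsubC : ∀ i, Cfam i ⊆ C := fun i => by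
    rw [hC i]
    exact hcone.coneHull_subset
      (union_subset (range_subset_iff.2 he) (image_subset_iff.2 fun j _ => hx j))
  have hproj : ∀ i, Prod.snd '' Cfam i = Dfam i := fun i => by
    rw [hC i, hDfam i]
    exact image_snd_coneHull_stdBasisFst_union x _
  have hdim : ∀ i, coneDim (Cfam i) = k + n := fun i => by
    rw [hC i, coneDim_coneHull_stdBasisFst_union x _ (hDspan i), Fintype.card_fin,
      Module.finrank_fin_fun]
  have hsector : ∀ i, IsSector (Cfam i) := fun i => by
    rw [hC i]
    exact isSector_coneHull_stdBasisFst_union x (hDspan i) (by rw [hJ i, Module.finrank_fin_fun])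
  have hcap : ∀ i l, Prod.snd '' (Cfam i ∩ Cfam l) = Dfam i ∩ Dfam l := fun i l => by
    rw [← hproj i, ← hproj l, hC i, hC l]
    exact image_snd_inter_of_add_mem {v | ∀ a, 0 ≤ v a}
      (fun z hz => hsub (hsubC i (hC i ▸ hz))) (fun z hz => hsub (hsubC l (hC l ▸ hz)))
      (fun z hz _ => add_mk_zero_mem_coneHull_stdBasisFst_union x _ hz)
      (fun z hz _ => add_mk_zero_mem_coneHull_stdBasisFst_union x _ hz)
  have hfull : ∀ i, IsFullCone (Cfam i) := fun i =>
    ⟨(hsector i).1, by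
      rw [hdim i, Module.finrank_prod, Module.finrank_fin_fun, Module.finrank_fin_fun]⟩
  refine ⟨⟨hsubC, fun i => ⟨hsector i, hfull i⟩, hCunion, fun i l hil => ?_⟩, hdim, hproj,
    fun i l _ => hcap i l⟩
  exact interior_eq_empty_of_isOpenMap isOpenMap_snd (hcap i l).subset (hDinter i l hil)

/-- Given a cone `C ⊆ ℝ_{≥0}^k × ℝ^n` containing the first `k` standard basis
vectors with `π_n(C) = ℝ^n`, points `x_1,…,x_m ∈ C`, index sets `J_1,…,J_p` of cardinality
`n`, subcones `C_i = coneHull({e_1,…,e_k} ∪ {x_j : j ∈ J_i})` and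
`D_i = coneHull({π_n(x_j) : j ∈ J_i})`: if `C = ∪ C_i` and `{D_i}` is a sector decomposition
of `ℝ^n` (by full sectors), then `{C_i}` is a sector decomposition of `C` with each `C_i`
of dimension `k + n`; moreover `π_n(C_i) = D_i` and `π_n(C_i ∩ C_ℓ) = D_i ∩ D_ℓ`. -/
theorem stmt_3 (k n m p : ℕ) (hk : 0 < k) (hn : 0 < n) (hm : 0 < m) (hp : 0 < p)
    (hmn : n ≤ m)
    (C : Set ((Fin k → ℝ) × (Fin n → ℝ)))
    (hcone : IsCone C)
    (hsub : C ⊆ {q : (Fin k → ℝ) × (Fin n → ℝ) | ∀ i, 0 ≤ q.1 i})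
    (he : ∀ i : Fin k, ((Pi.single i 1 : Fin k → ℝ), (0 : Fin n → ℝ)) ∈ C)
    (hproj : Prod.snd '' C = Set.univ)
    (x : Fin m → (Fin k → ℝ) × (Fin n → ℝ)) (hx : ∀ j, x j ∈ C)
    (J : Fin p → Finset (Fin m)) (hJ : ∀ i, (J i).card = n)
    (Cfam : Fin p → Set ((Fin k → ℝ) × (Fin n → ℝ)))
    (hCfam : ∀ i, Cfam i = coneHull
      ((Set.range fun a : Fin k => ((Pi.single a 1 : Fin k → ℝ), (0 : Fin n → ℝ)))
        ∪ (x '' ↑(J i))))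
    (Dfam : Fin p → Set (Fin n → ℝ))
    (hDfam : ∀ i, Dfam i = coneHull ((fun j => (x j).2) '' ↑(J i)))
    (hCunion : C = ⋃ i, Cfam i)
    (hDdecomp : IsSectorDecomposition Set.univ Dfam) :
    IsSectorDecomposition C Cfam ∧
    (∀ i, coneDim (Cfam i) = k + n) ∧
    (∀ i, Prod.snd '' Cfam i = Dfam i) ∧
    (∀ i l, i ≠ l → Prod.snd '' (Cfam i ∩ Cfam l) = Dfam i ∩ Dfam l) :=
  stmt_3_general k n m p C hcone hsub he x hx J hJ Cfam hCfam Dfam hDfam hCunion hDdecomp
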